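/- arXiv:0809.0744 — 3 statements merged into one kernel-verified Lean document; each statement's English description precedes it below -/
import Mathlib

section
/- If (X, d) is a compact metric space and μ is a signed Borel measure of total mass 1 on X such that I(μ) = M(X) < ∞ (i.e., μ is maximal), then the function d_μ(x) = ∫ d(x,y) dμ(y) is constant on X with value M(X). -/
/-!
Fix `x ∈ X` and perturb `μ` in the direction `σ = δₓ - μ`, which keeps the total mass equal to
one. By bilinearity and symmetry of the distance kernel,
`I(μ + tσ) = I(μ) + 2t (d_μ(x) - I(μ)) + t² I(σ)`, and since this is at most `I(μ)` for every
real `t`, the linear coefficient `d_μ(x) - I(μ)` must vanish.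
-/

open MeasureTheory

/-- Integral of a function against a finite signed Borel measure, via Jordan decomposition. -/
noncomputable def sInt {X : Type*} [MeasurableSpace X] (μ : SignedMeasure X) (f : X → ℝ) : ℝ :=
  (∫ x, f x ∂μ.toJordanDecomposition.posPart) - ∫ x, f x ∂μ.toJordanDecomposition.negPart

/-- Energy `I(μ, ν) = ∫∫ d(x,y) dμ(x) dν(y)` with respect to a kernel `d`. -/
noncomputable def en {X : Type*} [MeasurableSpace X] (d : X → X → ℝ)
    (μ ν : SignedMeasure X) : ℝ :=
  sInt μ (fun x => sInt ν (fun y => d x y))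

/-- The potential `d_μ(x) = ∫ d(x,y) dμ(y)`. -/
noncomputable def dPot {X : Type*} [MeasurableSpace X] (d : X → X → ℝ)
    (μ : SignedMeasure X) (x : X) : ℝ :=
  sInt μ (fun y => d x y)

/-- The set of energies `I(μ)` of signed Borel measures of total mass one. -/
noncomputable def MSet (X : Type*) [MetricSpace X] [MeasurableSpace X] : Set ℝ :=
  {r | ∃ μ : SignedMeasure X, μ Set.univ = (1 : ℝ) ∧ en (fun x y => dist x y) μ μ = r}


section Integration

variable {X : Type*} [TopologicalSpace X] [CompactSpace X] [MeasurableSpace X]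
  [OpensMeasurableSpace X]

lemma Continuous.integrable_of_compactSpace {f : X → ℝ} (hf : Continuous f) (m : Measure X)
    [IsFiniteMeasure m] : Integrable f m :=
  hf.integrable_of_hasCompactSupport (HasCompactSupport.of_compactSpace f)

lemma sInt_eq_integral_sub_integral {μ : SignedMeasure X} (m₁ m₂ : Measure X)
    [IsFiniteMeasure m₁] [IsFiniteMeasure m₂]
    (hμ : μ = m₁.toSignedMeasure - m₂.toSignedMeasure) {f : X → ℝ} (hf : Continuous f) :
    sInt μ f = (∫ x, f x ∂m₁) - ∫ x, f x ∂m₂ := by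
  set P := μ.toJordanDecomposition.posPart
  set N := μ.toJordanDecomposition.negPart
  have hPN : P.toSignedMeasure - N.toSignedMeasure = μ :=
    μ.toSignedMeasure_toJordanDecomposition
  have hsum : P + m₂ = m₁ + N := by
    rw [← Measure.toSignedMeasure_eq_toSignedMeasure_iff, Measure.toSignedMeasure_add,
      Measure.toSignedMeasure_add]
    exact sub_eq_sub_iff_add_eq_add.mp (hPN.trans hμ)
  have hint := congrArg (fun m : Measure X => ∫ x, f x ∂m) hsum
  simp only [integral_add_measure (hf.integrable_of_compactSpace _)
    (hf.integrable_of_compactSpace _)] at hint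
  rw [sInt]
  linarith

lemma sInt_toSignedMeasure (m : Measure X) [IsFiniteMeasure m] {f : X → ℝ}
    (hf : Continuous f) : sInt m.toSignedMeasure f = ∫ x, f x ∂m := by
  rw [sInt_eq_integral_sub_integral m 0 (by simp) hf, integral_zero_measure, sub_zero]

lemma sInt_add (μ ν : SignedMeasure X) {f : X → ℝ} (hf : Continuous f) :
    sInt (μ + ν) f = sInt μ f + sInt ν f := by
  rw [sInt_eq_integral_sub_integral
    (μ.toJordanDecomposition.posPart + ν.toJordanDecomposition.posPart)
    (μ.toJordanDecomposition.negPart + ν.toJordanDecomposition.negPart) ?_ hf]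
  · simp only [sInt, integral_add_measure (hf.integrable_of_compactSpace _)
      (hf.integrable_of_compactSpace _)]
    ring
  · conv_lhs => rw [← μ.toSignedMeasure_toJordanDecomposition,
      ← ν.toSignedMeasure_toJordanDecomposition]
    simp only [JordanDecomposition.toSignedMeasure, Measure.toSignedMeasure_add]
    abel

lemma sInt_sub (μ ν : SignedMeasure X) {f : X → ℝ} (hf : Continuous f) :
    sInt (μ - ν) f = sInt μ f - sInt ν f := by
  rw [sInt_eq_integral_sub_integral
    (μ.toJordanDecomposition.posPart + ν.toJordanDecomposition.negPart)
    (μ.toJordanDecomposition.negPart + ν.toJordanDecomposition.posPart) ?_ hf]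
  · simp only [sInt, integral_add_measure (hf.integrable_of_compactSpace _)
      (hf.integrable_of_compactSpace _)]
    ring
  · conv_lhs => rw [← μ.toSignedMeasure_toJordanDecomposition,
      ← ν.toSignedMeasure_toJordanDecomposition]
    simp only [JordanDecomposition.toSignedMeasure, Measure.toSignedMeasure_add]
    abel

lemma sInt_add_const_mul (μ : SignedMeasure X) {f g : X → ℝ} (hf : Continuous f)
    (hg : Continuous g) (t : ℝ) :
    sInt μ (fun x => f x + t * g x) = sInt μ f + t * sInt μ g := by
  have hf' := hf.integrable_of_compactSpace
  have hg' (m : Measure X) [IsFiniteMeasure m] := (hg.integrable_of_compactSpace m).const_mul t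
  simp only [sInt]
  rw [integral_add (hf' _) (hg' _), integral_add (hf' _) (hg' _), integral_const_mul,
    integral_const_mul]
  ring

end Integration

lemma sInt_smul {X : Type*} [MeasurableSpace X] (r : ℝ) (μ : SignedMeasure X) (f : X → ℝ) :
    sInt (r • μ) f = r * sInt μ f := by
  rcases le_or_gt 0 r with hr | hr
  · simp only [sInt, SignedMeasure.toJordanDecomposition_smul_real,
      JordanDecomposition.real_smul_posPart_nonneg _ _ hr,
      JordanDecomposition.real_smul_negPart_nonneg _ _ hr, integral_smul_nnreal_measure,
      NNReal.smul_def, Real.coe_toNNReal _ hr, smul_eq_mul]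
    ring
  · simp only [sInt, SignedMeasure.toJordanDecomposition_smul_real,
      JordanDecomposition.real_smul_posPart_neg _ _ hr,
      JordanDecomposition.real_smul_negPart_neg _ _ hr, integral_smul_nnreal_measure,
      NNReal.smul_def, Real.coe_toNNReal _ (neg_nonneg.mpr hr.le), smul_eq_mul]
    ring

lemma en_eq_sInt_dPot {X : Type*} [MeasurableSpace X] (d : X → X → ℝ) (μ ν : SignedMeasure X) :
    en d μ ν = sInt μ (dPot d ν) :=
  rfl

section Potential

variable {X : Type*} [PseudoMetricSpace X] [CompactSpace X] [MeasurableSpace X] [BorelSpace X]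

lemma lipschitzWith_integral_dist (m : Measure X) [IsFiniteMeasure m] :
    LipschitzWith (m Set.univ).toNNReal (fun x => ∫ y, dist x y ∂m) := by
  have hint (a : X) : Integrable (fun y => dist a y) m :=
    (continuous_const.dist continuous_id).integrable_of_compactSpace m
  refine LipschitzWith.of_dist_le_mul fun a b => ?_
  rw [Real.dist_eq, ← integral_sub (hint a) (hint b)]
  calc |∫ y, (dist a y - dist b y) ∂m| ≤ ∫ y, |dist a y - dist b y| ∂m :=
        abs_integral_le_integral_abs
    _ ≤ ∫ _, dist a b ∂m :=
        integral_mono ((hint a).sub (hint b)).abs (integrable_const _)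
          fun y => abs_dist_sub_le a b y
    _ = (m Set.univ).toNNReal * dist a b := by
        rw [integral_const, smul_eq_mul, measureReal_def, ENNReal.coe_toNNReal_eq_toReal]

lemma continuous_dPot_dist (ν : SignedMeasure X) :
    Continuous (dPot (fun x y => dist x y) ν) :=
  (lipschitzWith_integral_dist _).continuous.sub (lipschitzWith_integral_dist _).continuous

lemma dPot_dist_add_smul (μ σ : SignedMeasure X) (t : ℝ) (x : X) :
    dPot (fun x y => dist x y) (μ + t • σ) x
      = dPot (fun x y => dist x y) μ x + t * dPot (fun x y => dist x y) σ x := by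
  have hcont : Continuous fun y => dist x y := continuous_const.dist continuous_id
  rw [dPot, sInt_add _ _ hcont, sInt_smul]
  rfl

lemma en_dist_add_smul_self (μ σ : SignedMeasure X) (t : ℝ) :
    en (fun x y => dist x y) (μ + t • σ) (μ + t • σ)
      = en (fun x y => dist x y) μ μ
        + t * (en (fun x y => dist x y) μ σ + en (fun x y => dist x y) σ μ)
        + t ^ 2 * en (fun x y => dist x y) σ σ := by
  have hμ := continuous_dPot_dist μ
  have hσ := continuous_dPot_dist σ
  simp only [en_eq_sInt_dPot]
  rw [funext (dPot_dist_add_smul μ σ t),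
    sInt_add _ _ (f := fun x => _ + t * _) (hμ.add (continuous_const.mul hσ)), sInt_smul,
    sInt_add_const_mul μ hμ hσ, sInt_add_const_mul σ hμ hσ]
  ring

lemma dPot_dist_dirac_sub (x : X) (μ : SignedMeasure X) (a : X) :
    dPot (fun x y => dist x y) ((Measure.dirac x).toSignedMeasure - μ) a
      = dist a x - dPot (fun x y => dist x y) μ a := by
  have hcont : Continuous fun y => dist a y := continuous_const.dist continuous_id
  rw [dPot, sInt_sub _ _ hcont, sInt_toSignedMeasure _ hcont,
    integral_dirac' _ _ hcont.stronglyMeasurable]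
  rfl

lemma en_dist_dirac_sub_right (x : X) (μ : SignedMeasure X) :
    en (fun x y => dist x y) μ ((Measure.dirac x).toSignedMeasure - μ)
      = dPot (fun x y => dist x y) μ x - en (fun x y => dist x y) μ μ := by
  have hx : Continuous fun a => dist a x := continuous_id.dist continuous_const
  rw [en_eq_sInt_dPot, funext (dPot_dist_dirac_sub x μ)]
  calc sInt μ (fun a => dist a x - dPot (fun x y => dist x y) μ a)
      = sInt μ (fun a => dist a x + -1 * dPot (fun x y => dist x y) μ a) := by
        simp only [neg_one_mul, sub_eq_add_neg]
    _ = sInt μ (fun a => dist x a) - en (fun x y => dist x y) μ μ := by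
        rw [sInt_add_const_mul μ hx (continuous_dPot_dist μ), en_eq_sInt_dPot]
        simp only [dist_comm]
        ring

lemma en_dist_dirac_sub_left (x : X) (μ : SignedMeasure X) :
    en (fun x y => dist x y) ((Measure.dirac x).toSignedMeasure - μ) μ
      = dPot (fun x y => dist x y) μ x - en (fun x y => dist x y) μ μ := by
  rw [en_eq_sInt_dPot, en_eq_sInt_dPot, sInt_sub _ _ (continuous_dPot_dist μ),
    sInt_toSignedMeasure _ (continuous_dPot_dist μ),
    integral_dirac' _ _ (continuous_dPot_dist μ).stronglyMeasurable]

end Potential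

lemma eq_zero_of_forall_mul_add_sq_mul_nonpos {b K : ℝ}
    (h : ∀ t : ℝ, t * b + t ^ 2 * K ≤ 0) : b = 0 := by
  have hs : 0 < |K| + 1 := by positivity
  -- with this `t` one has `t * b = t ^ 2 * (|K| + 1)`, a square term dominating `t ^ 2 * K`
  set t := b / (|K| + 1)
  have hb : b = t * (|K| + 1) := (div_mul_cancel₀ b hs.ne').symm
  have ht : t ^ 2 * (|K| + 1 + K) ≤ 0 := by
    have := h t
    rw [hb] at this
    linear_combination this
  have hK : 0 ≤ |K| + K := by linarith [neg_abs_le K]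
  have ht0 : t = 0 :=
    pow_eq_zero_iff two_ne_zero |>.mp <|
      le_antisymm (by nlinarith [mul_nonneg (sq_nonneg t) hK]) (sq_nonneg t)
  rw [hb, ht0, zero_mul]

/-- If `μ` is a maximal mass-one signed measure (its energy is the supremum `M(X)`),
then its potential `d_μ` is constant on `X` with value `M(X) = I(μ)`. -/
theorem stmt0 {X : Type*} [MetricSpace X] [CompactSpace X] [MeasurableSpace X] [BorelSpace X]
    (μ : SignedMeasure X) (hμ : μ Set.univ = (1 : ℝ))
    (hmax : IsLUB (MSet X) (en (fun x y => dist x y) μ μ)) :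
    ∀ x : X, dPot (fun x y => dist x y) μ x = en (fun x y => dist x y) μ μ := by
  intro x
  set σ := (Measure.dirac x).toSignedMeasure - μ
  have hσ : σ Set.univ = 0 := by simp [σ, hμ]
  have hle (t : ℝ) : t * (2 * (dPot (fun x y => dist x y) μ x - en (fun x y => dist x y) μ μ))
      + t ^ 2 * en (fun x y => dist x y) σ σ ≤ 0 := by
    have := hmax.1 ⟨μ + t • σ, by simp [hμ, hσ], rfl⟩
    rw [en_dist_add_smul_self, en_dist_dirac_sub_left, en_dist_dirac_sub_right] at this
    linarith
  linarith [eq_zero_of_forall_mul_add_sq_mul_nonpos hle]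
end

section
/- Let (X, d) be a finite quasihypermetric space. Then the following are equivalent: (1) M(X) < ∞; (2) there exists μ ∈ M₁(X) with I(μ) = M(X); (3) there exists μ ∈ M₁(X) with d_μ constant on X. -/
/-!
If `m` bounds `I` on `M₁(X)`, then quasihypermetricity gives `I(α) ≤ m (∑ α)²` for every `α`,
so the symmetric form `B = m (∑ ·)(∑ ·) - I` is positive semidefinite. For such a form, the
total-mass functional `ℓ` either does not vanish on the radical of `B` or lies in the range of
`B`, which is the annihilator of the radical; either way some `μ` with `ℓ μ = 1` has `B μ` a
multiple of `ℓ`, and evaluating at point masses says that `d_μ` is constant. Conversely, if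
`d_μ ≡ c` and `ν ∈ M₁(X)`, then `α = ν - μ` has mass zero, so
`I(ν) = I(μ) + 2 c ∑ α + I(α) = I(μ) + I(α) ≤ I(μ)` and `μ` attains `M(X)`.
-/

open Finset

namespace LinearMap.BilinForm

variable {K V : Type*} [Field K] [AddCommGroup V] [Module K V] {B : LinearMap.BilinForm K V}

theorem IsSymm.range_eq_dualAnnihilator_ker [FiniteDimensional K V] (hB : B.IsSymm) :
    range B = (ker B).dualAnnihilator := by
  have hflip : B.dualMap ∘ₗ (Module.evalEquiv K V).toLinearMap = B := by
    ext x y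
    exact hB.eq y x
  calc range B = range (B.dualMap ∘ₗ (Module.evalEquiv K V).toLinearMap) := by rw [hflip]
    _ = range B.dualMap := range_comp_of_range_eq_top _ (LinearEquiv.range _)
    _ = (ker B).dualAnnihilator := range_dualMap_eq_dualAnnihilator_ker B

variable [LinearOrder K] [IsStrictOrderedRing K]

theorem IsPosSemidef.apply_eq_zero_of_apply_self_eq_zero (hB : B.IsPosSemidef) {x : V}
    (hx : B x x = 0) : B x = 0 := by
  ext y
  have hquad : ∀ t : K, 0 ≤ B y y * (t * t) + 2 * B x y * t + 0 := fun t => by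
    have := hB.isNonneg.nonneg (x + t • y)
    simp only [map_add, map_smul, LinearMap.add_apply, LinearMap.smul_apply, smul_eq_mul, hx,
      hB.isSymm.eq y x] at this
    linarith
  have := discrim_le_zero hquad
  rw [discrim] at this
  simpa using pow_eq_zero_iff (n := 2) two_ne_zero |>.mp (by nlinarith [sq_nonneg (B x y)])

theorem IsPosSemidef.exists_apply_eq_one_and_eq_smul [FiniteDimensional K V]
    (hB : B.IsPosSemidef) {ℓ : Module.Dual K V} (hℓ : ℓ ≠ 0) :
    ∃ μ : V, ℓ μ = 1 ∧ ∃ c : K, B μ = c • ℓ := by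
  by_cases hker : ker B ≤ ker ℓ
  · obtain ⟨x, hBx⟩ : ℓ ∈ range B := by
      rw [hB.isSymm.range_eq_dualAnnihilator_ker, Submodule.mem_dualAnnihilator]
      exact hker
    have hℓx : ℓ x ≠ 0 := fun h =>
      hℓ (hBx ▸ hB.apply_eq_zero_of_apply_self_eq_zero (by rw [hBx, h]))
    exact ⟨(ℓ x)⁻¹ • x, by simp [hℓx], (ℓ x)⁻¹, by rw [map_smul, hBx]⟩
  · obtain ⟨x, hBx, hℓx⟩ := SetLike.not_le_iff_exists.mp hker
    replace hℓx : ℓ x ≠ 0 := hℓx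
    refine ⟨(ℓ x)⁻¹ • x, by simp [hℓx], 0, ?_⟩
    simp [mem_ker.mp hBx]

end LinearMap.BilinForm

section Quasihypermetric

variable {X : Type*} [Fintype X]

variable (X) in
def totalMass : Module.Dual ℝ (X → ℝ) := ∑ i, LinearMap.proj i

@[simp] lemma totalMass_apply (μ : X → ℝ) : totalMass X μ = ∑ i, μ i := by
  simp [totalMass]

variable [PseudoMetricSpace X]

variable (X) in
def IsQuasihypermetric : Prop :=
  ∀ α : X → ℝ, ∑ i, α i = 0 → ∑ i, ∑ j, α i * α j * dist i j ≤ 0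

variable (X) in
def massOneEnergies : Set ℝ :=
  {r | ∃ μ : X → ℝ, ∑ i, μ i = 1 ∧ ∑ i, ∑ j, μ i * μ j * dist i j = r}

-- In the notation of the paper, `potential μ = d_μ` and `distanceForm X μ μ = I(μ)`.
def potential (μ : X → ℝ) (x : X) : ℝ := ∑ y, dist x y * μ y

variable (X) in
def distanceForm : LinearMap.BilinForm ℝ (X → ℝ) :=
  LinearMap.mk₂ ℝ (fun μ ν => ∑ i, ∑ j, μ i * ν j * dist i j)
    (fun _ _ _ => by simp only [Pi.add_apply, add_mul, sum_add_distrib])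
    (fun _ _ _ => by simp only [Pi.smul_apply, smul_eq_mul, mul_assoc, ← mul_sum])
    (fun _ _ _ => by simp only [Pi.add_apply, mul_add, add_mul, sum_add_distrib])
    (fun _ _ _ => by
      simp only [Pi.smul_apply, smul_eq_mul, mul_left_comm _ (_ : ℝ), mul_assoc, ← mul_sum])

lemma distanceForm_apply (μ ν : X → ℝ) :
    distanceForm X μ ν = ∑ i, ∑ j, μ i * ν j * dist i j :=
  rfl

lemma distanceForm_isSymm : (distanceForm X).IsSymm := by
  refine ⟨fun μ ν => ?_⟩
  rw [distanceForm_apply, distanceForm_apply, sum_comm]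
  exact sum_congr rfl fun i _ => sum_congr rfl fun j _ => by rw [dist_comm]; ring

lemma distanceForm_apply_eq_sum_mul_potential (α μ : X → ℝ) :
    distanceForm X α μ = ∑ x, α x * potential μ x := by
  simp only [distanceForm_apply, potential, mul_sum]
  exact sum_congr rfl fun i _ => sum_congr rfl fun j _ => by ring

theorem IsQuasihypermetric.isLUB_massOneEnergies (hq : IsQuasihypermetric X) {μ : X → ℝ}
    (hμ : ∑ i, μ i = 1) {c : ℝ} (hc : ∀ x, potential μ x = c) :
    IsLUB (massOneEnergies X) (∑ i, ∑ j, μ i * μ j * dist i j) := by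
  refine ⟨?_, fun b hb => hb ⟨μ, hμ, rfl⟩⟩
  rintro _ ⟨ν, hν, rfl⟩
  set α := ν - μ
  have hα : ∑ i, α i = 0 := by simp [α, sum_sub_distrib, hμ, hν]
  have hαμ : distanceForm X α μ = 0 := by
    simp [distanceForm_apply_eq_sum_mul_potential, hc, ← sum_mul, hα]
  have hexpand : distanceForm X ν ν =
      distanceForm X μ μ + 2 * distanceForm X α μ + distanceForm X α α := by
    rw [show ν = μ + α by simp [α]]
    simp only [map_add, LinearMap.add_apply, distanceForm_isSymm.eq μ α]
    ring
  have hqα := hq α hα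
  simp only [← distanceForm_apply] at hqα ⊢
  linarith

theorem IsQuasihypermetric.apply_self_le_mul_sq (hq : IsQuasihypermetric X) {m : ℝ}
    (hm : m ∈ upperBounds (massOneEnergies X)) (α : X → ℝ) :
    distanceForm X α α ≤ m * totalMass X α ^ 2 := by
  rw [totalMass_apply]
  by_cases hs : ∑ i, α i = 0
  · simpa [hs, distanceForm_apply] using hq α hs
  set s := ∑ i, α i
  have hscaled : distanceForm X (s⁻¹ • α) (s⁻¹ • α) ≤ m :=
    hm ⟨s⁻¹ • α, by simp [← mul_sum, s, hs], (distanceForm_apply _ _).symm⟩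
  simp only [map_smul, LinearMap.smul_apply, smul_eq_mul] at hscaled
  calc distanceForm X α α = s ^ 2 * (s⁻¹ * (s⁻¹ * distanceForm X α α)) := by field_simp
    _ ≤ s ^ 2 * m := by gcongr
    _ = m * s ^ 2 := mul_comm _ _

theorem IsQuasihypermetric.exists_potential_eq_const (hq : IsQuasihypermetric X) {m : ℝ}
    (hm : m ∈ upperBounds (massOneEnergies X)) (hne : (massOneEnergies X).Nonempty) :
    ∃ μ : X → ℝ, ∑ i, μ i = 1 ∧ ∃ c, ∀ x, potential μ x = c := by
  classical
  set B : LinearMap.BilinForm ℝ (X → ℝ) :=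
    m • (totalMass X).smulRight (totalMass X) - distanceForm X
  have hB : B.IsPosSemidef :=
    { eq μ ν := by simp [B, distanceForm_isSymm.eq μ ν, mul_comm]
      nonneg α := by simpa [B, sq] using hq.apply_self_le_mul_sq hm α }
  have hℓ : totalMass X ≠ 0 := by
    obtain ⟨_, μ, hμ, -⟩ := hne
    exact fun h => by simpa [h] using (totalMass_apply μ).trans hμ
  obtain ⟨μ, hμ, c, hBμ⟩ := hB.exists_apply_eq_one_and_eq_smul hℓ
  rw [totalMass_apply] at hμ
  refine ⟨μ, hμ, m - c, fun x => ?_⟩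
  have hx := LinearMap.congr_fun hBμ (Pi.single x 1)
  simp only [B, LinearMap.sub_apply, LinearMap.smul_apply, LinearMap.coe_smulRight,
    totalMass_apply, hμ, one_smul, Pi.single_apply, sum_ite_eq', mem_univ, ↓reduceIte, smul_eq_mul,
    mul_one, distanceForm_isSymm.eq μ, distanceForm_apply_eq_sum_mul_potential, ite_mul, one_mul,
    zero_mul] at hx
  linarith

end Quasihypermetric

theorem stmt15_general {X : Type*} [Fintype X] [MetricSpace X]
    (hq : ∀ α : X → ℝ, ∑ i, α i = 0 → ∑ i, ∑ j, α i * α j * dist i j ≤ 0) :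
    ((∃ m : ℝ, IsLUB {r : ℝ | ∃ μ : X → ℝ, ∑ i, μ i = 1 ∧
          ∑ i, ∑ j, μ i * μ j * dist i j = r} m) ↔
        (∃ μ : X → ℝ, ∑ i, μ i = 1 ∧
          IsLUB {r : ℝ | ∃ ν : X → ℝ, ∑ i, ν i = 1 ∧
              ∑ i, ∑ j, ν i * ν j * dist i j = r}
            (∑ i, ∑ j, μ i * μ j * dist i j))) ∧
      ((∃ m : ℝ, IsLUB {r : ℝ | ∃ μ : X → ℝ, ∑ i, μ i = 1 ∧
          ∑ i, ∑ j, μ i * μ j * dist i j = r} m) ↔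
        (∃ μ : X → ℝ, ∑ i, μ i = 1 ∧ ∃ c : ℝ, ∀ x, ∑ y, dist x y * μ y = c)) := by
  have bounded_imp_invariant : (∃ m, IsLUB (massOneEnergies X) m) →
      ∃ μ : X → ℝ, ∑ i, μ i = 1 ∧ ∃ c, ∀ x, potential μ x = c :=
    fun ⟨_, hm⟩ => IsQuasihypermetric.exists_potential_eq_const hq hm.1 hm.nonempty
  have invariant_imp_maximal : (∃ μ : X → ℝ, ∑ i, μ i = 1 ∧ ∃ c, ∀ x, potential μ x = c) →
      ∃ μ : X → ℝ, ∑ i, μ i = 1 ∧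
        IsLUB (massOneEnergies X) (∑ i, ∑ j, μ i * μ j * dist i j) :=
    fun ⟨μ, hμ, _, hc⟩ => ⟨μ, hμ, IsQuasihypermetric.isLUB_massOneEnergies hq hμ hc⟩
  have maximal_imp_bounded : (∃ μ : X → ℝ, ∑ i, μ i = 1 ∧
      IsLUB (massOneEnergies X) (∑ i, ∑ j, μ i * μ j * dist i j)) →
      ∃ m, IsLUB (massOneEnergies X) m :=
    fun ⟨_, _, h⟩ => ⟨_, h⟩
  exact ⟨⟨invariant_imp_maximal ∘ bounded_imp_invariant, maximal_imp_bounded⟩,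
    ⟨bounded_imp_invariant, maximal_imp_bounded ∘ invariant_imp_maximal⟩⟩

/-- For a finite quasihypermetric space, the following are equivalent: `M(X) < ∞`;
there is a maximal measure (a mass-one weight vector attaining the supremum `M(X)`);
there is a `d`-invariant measure (a mass-one weight vector with constant potential). -/
theorem stmt15 {X : Type*} [Fintype X] [Nonempty X] [MetricSpace X]
    (hq : ∀ α : X → ℝ, ∑ i, α i = 0 → ∑ i, ∑ j, α i * α j * dist i j ≤ 0) :
    ((∃ m : ℝ, IsLUB {r : ℝ | ∃ μ : X → ℝ, ∑ i, μ i = 1 ∧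
          ∑ i, ∑ j, μ i * μ j * dist i j = r} m) ↔
        (∃ μ : X → ℝ, ∑ i, μ i = 1 ∧
          IsLUB {r : ℝ | ∃ ν : X → ℝ, ∑ i, ν i = 1 ∧
              ∑ i, ∑ j, ν i * ν j * dist i j = r}
            (∑ i, ∑ j, μ i * μ j * dist i j))) ∧
      ((∃ m : ℝ, IsLUB {r : ℝ | ∃ μ : X → ℝ, ∑ i, μ i = 1 ∧
          ∑ i, ∑ j, μ i * μ j * dist i j = r} m) ↔
        (∃ μ : X → ℝ, ∑ i, μ i = 1 ∧ ∃ c : ℝ, ∀ x, ∑ y, dist x y * μ y = c)) :=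
  stmt15_general hq
end

section
/- If (X, d) is a finite strictly quasihypermetric space, then M(X) < ∞. -/
/-!
The quadratic form `Q μ = ∑ i, ∑ j, μ i μ j d(xᵢ, xⱼ)` is negative definite on the hyperplane
`∑ μ = 0`, so by compactness of its unit sphere `Q α ≤ -c ‖α‖²` there for some `c > 0`. Writing a
weight of total mass one as `μ₀ + α` with `α` in the hyperplane, `Q (μ₀ + α)` is `Q μ₀` plus a
linear term in `α` plus `Q α`, and a linear minus a coercive quadratic function of `‖α‖` is bounded
above.
-/

namespace QuadraticMap

variable {E : Type*} [NormedAddCommGroup E] [NormedSpace ℝ E] [FiniteDimensional ℝ E]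

theorem continuous_of_finiteDimensional (Q : QuadraticForm ℝ E) : Continuous Q := by
  let B : E →L[ℝ] E →L[ℝ] ℝ :=
    (LinearMap.toContinuousLinearMap.toLinearMap ∘ₗ Q.associated).toContinuousLinearMap
  have hB : ∀ x, Q x = B x x := fun x => (associated_eq_self_apply ℝ Q x).symm
  simp only [funext hB]
  exact B.continuous.clm_apply continuous_id

theorem exists_le_neg_mul_norm_sq (Q : QuadraticForm ℝ E) (V : Submodule ℝ E)
    (hneg : ∀ v ∈ V, v ≠ 0 → Q v < 0) : ∃ c > 0, ∀ v ∈ V, Q v ≤ -c * ‖v‖ ^ 2 := by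
  have hK : IsCompact ((V : Set E) ∩ Metric.sphere 0 1) :=
    (isCompact_sphere 0 1).inter_left V.closed_of_finiteDimensional
  obtain ⟨c, hc, hcK⟩ := hK.exists_forall_le' (f := fun u => -Q u)
    (continuous_of_finiteDimensional Q).neg.continuousOn
    fun u ⟨huV, hu⟩ => neg_pos.mpr <| hneg u huV (ne_zero_of_mem_unit_sphere ⟨u, hu⟩)
  refine ⟨c, hc, fun v hv => ?_⟩
  rcases eq_or_ne v 0 with rfl | hv0
  · simp
  have hnorm : 0 < ‖v‖ := norm_pos_iff.mpr hv0
  have hunit := hcK (‖v‖⁻¹ • v)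
    ⟨V.smul_mem _ hv, by simp [norm_smul, inv_mul_cancel₀ hnorm.ne']⟩
  rw [QuadraticMap.map_smul, smul_eq_mul] at hunit
  field_simp at hunit
  linarith

theorem bddAbove_image_setOf_eq_of_neg_on_ker (Q : QuadraticForm ℝ E) (ℓ : E →ₗ[ℝ] ℝ)
    (hneg : ∀ v, ℓ v = 0 → v ≠ 0 → Q v < 0) (a : ℝ) : BddAbove (Q '' {x | ℓ x = a}) := by
  rcases Set.eq_empty_or_nonempty {x | ℓ x = a} with h | ⟨x₀, hx₀⟩
  · simp [h]
  obtain ⟨c, hc, hQ⟩ := exists_le_neg_mul_norm_sq Q (LinearMap.ker ℓ) hneg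
  let L := (polarBilin Q x₀).toContinuousLinearMap
  refine ⟨Q x₀ + ‖L‖ ^ 2 / (4 * c), ?_⟩
  rintro _ ⟨x, hx, rfl⟩
  have hv : x - x₀ ∈ LinearMap.ker ℓ := LinearMap.mem_ker.mpr (by rw [map_sub, hx, hx₀, sub_self])
  have hsplit : Q x = Q x₀ + L (x - x₀) + Q (x - x₀) := by
    simp only [L, LinearMap.coe_toContinuousLinearMap', polarBilin_apply_apply, polar,
      add_sub_cancel]
    ring
  have hL : L (x - x₀) ≤ ‖L‖ * ‖x - x₀‖ := (le_abs_self _).trans (L.le_opNorm _)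
  have hQv := hQ _ hv
  have hmax : ‖L‖ * ‖x - x₀‖ - c * ‖x - x₀‖ ^ 2 ≤ ‖L‖ ^ 2 / (4 * c) := by
    rw [le_div_iff₀ (by positivity)]
    nlinarith [sq_nonneg (2 * c * ‖x - x₀‖ - ‖L‖)]
  linarith

end QuadraticMap

noncomputable def distQuadraticForm (X : Type*) [Fintype X] [DecidableEq X] [PseudoMetricSpace X] :
    QuadraticForm ℝ (X → ℝ) :=
  (Matrix.of fun i j : X => dist i j).toQuadraticForm'

theorem distQuadraticForm_apply {X : Type*} [Fintype X] [DecidableEq X] [PseudoMetricSpace X]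
    (μ : X → ℝ) : distQuadraticForm X μ = ∑ i, ∑ j, μ i * μ j * dist i j := by
  simp [distQuadraticForm, Matrix.toQuadraticForm', Matrix.toLinearMap₂'_apply, mul_assoc]

theorem stmt16_general {X : Type*} [Fintype X] [MetricSpace X]
    (hq : ∀ α : X → ℝ, ∑ i, α i = 0 → ∑ i, ∑ j, α i * α j * dist i j ≤ 0)
    (hs : ∀ α : X → ℝ, ∑ i, α i = 0 → ∑ i, ∑ j, α i * α j * dist i j = 0 → α = 0) :
    BddAbove {r : ℝ | ∃ μ : X → ℝ, ∑ i, μ i = 1 ∧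
      ∑ i, ∑ j, μ i * μ j * dist i j = r} := by
  classical
  let mass : (X → ℝ) →ₗ[ℝ] ℝ := Fintype.linearCombination ℝ fun _ => 1
  have hmass (μ : X → ℝ) : mass μ = ∑ i, μ i := by simp [mass, Fintype.linearCombination_apply]
  have hneg (α : X → ℝ) (hα : mass α = 0) (hα0 : α ≠ 0) : distQuadraticForm X α < 0 := by
    rw [hmass] at hα
    rw [distQuadraticForm_apply]
    exact (hq α hα).lt_of_ne fun h => hα0 (hs α hα h)
  refine (QuadraticMap.bddAbove_image_setOf_eq_of_neg_on_ker _ mass hneg 1).mono ?_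
  rintro _ ⟨μ, hμ, rfl⟩
  exact ⟨μ, by simpa [hmass] using hμ, distQuadraticForm_apply μ⟩

/-- A finite strictly quasihypermetric space has `M(X) < ∞`. -/
theorem stmt16 {X : Type*} [Fintype X] [Nonempty X] [MetricSpace X]
    (hq : ∀ α : X → ℝ, ∑ i, α i = 0 → ∑ i, ∑ j, α i * α j * dist i j ≤ 0)
    (hs : ∀ α : X → ℝ, ∑ i, α i = 0 → ∑ i, ∑ j, α i * α j * dist i j = 0 → α = 0) :
    BddAbove {r : ℝ | ∃ μ : X → ℝ, ∑ i, μ i = 1 ∧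
      ∑ i, ∑ j, μ i * μ j * dist i j = r} :=
  stmt16_general hq hs
end
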